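/- Let n ≥ r > 1 and let A₁, …, A_m be positive semidefinite Hermitian n×n matrices forming a generalized phase retrievable frame (i.e. x x* is determined by the values ⟨x x*, A_j⟩_ℝ). Define the α analysis map by α_j(x) = ⟨x x*, A_j⟩_ℝ^{1/2} and θ(x) = (x x*)^{1/2}. Then the optimal squared global lower Lipschitz constant A₀ := inf { Σ_{j=1}^m (α_j(x) − α_j(y))² / ‖θ(x) − θ(y)‖₂² : x, y ∈ ℂ^{n×r}, θ(x) ≠ θ(y) } equals 0. -/

import Mathlib

open Matrix Filter
open scoped ComplexOrder

noncomputable def frob {p q : ℕ} (x : Matrix (Fin p) (Fin q) ℂ) : ℝ :=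
  Real.sqrt (Matrix.trace (xᴴ * x)).re

noncomputable def rinner {p q : ℕ} (X Y : Matrix (Fin p) (Fin q) ℂ) : ℝ :=
  (Matrix.trace (Xᴴ * Y)).re

noncomputable def nuclear {p q : ℕ} (x : Matrix (Fin p) (Fin q) ℂ) : ℝ :=
  (Matrix.trace ((((Matrix.posSemidef_conjTranspose_mul_self x).1.eigenvectorUnitary : Matrix _ _ ℂ) *
    diagonal ((fun t : ℝ => (t : ℂ)) ∘ Real.sqrt ∘ (Matrix.posSemidef_conjTranspose_mul_self x).1.eigenvalues) *
    (star ((Matrix.posSemidef_conjTranspose_mul_self x).1.eigenvectorUnitary : Matrix _ _ ℂ))))).re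

noncomputable def theta {n r : ℕ} (x : Matrix (Fin n) (Fin r) ℂ) : Matrix (Fin n) (Fin n) ℂ :=
  ((((Matrix.posSemidef_self_mul_conjTranspose x).1.eigenvectorUnitary : Matrix _ _ ℂ) *
    diagonal ((fun t : ℝ => (t : ℂ)) ∘ Real.sqrt ∘ (Matrix.posSemidef_self_mul_conjTranspose x).1.eigenvalues) *
    (star ((Matrix.posSemidef_self_mul_conjTranspose x).1.eigenvectorUnitary : Matrix _ _ ℂ))))

noncomputable def psi {n r : ℕ} (x : Matrix (Fin n) (Fin r) ℂ) : Matrix (Fin n) (Fin n) ℂ :=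
  frob x • theta x

noncomputable def Dmet {n r : ℕ} (x y : Matrix (Fin n) (Fin r) ℂ) : ℝ :=
  ⨅ U : Matrix.unitaryGroup (Fin r) ℂ, frob (x - y * (U : Matrix (Fin r) (Fin r) ℂ))

noncomputable def dmet {n r : ℕ} (x y : Matrix (Fin n) (Fin r) ℂ) : ℝ :=
  ⨅ U : Matrix.unitaryGroup (Fin r) ℂ,
    frob (x - y * (U : Matrix (Fin r) (Fin r) ℂ)) * frob (x + y * (U : Matrix (Fin r) (Fin r) ℂ))

/-!
Choose a unit vector `u` that no nonzero `A j` annihilates (a vector space over an infinite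
field is not a finite union of proper subspaces) and a unit vector `v ⊥ u`, and put
`x t = [u, t v, 0, …, 0]`. Then `θ (x t) = u u* + t v v*`, so `‖θ (x t) - θ (x 0)‖₂ = t`,
while `α_j (x t) ^ 2 = a_j + t ^ 2 c_j` with `a_j = u* A_j u` and `c_j = v* A_j v`.
Positivity of `A_j` gives `a_j > 0` whenever `c_j ≠ 0`, so
`(α_j (x t) - α_j (x 0)) ^ 2 ≤ t ^ 4 c_j ^ 2 / (4 a_j)` and the quotient in the infimum is
`O(t ^ 2)`.
-/

theorem Real.sq_sqrt_add_sub_sqrt_le {a b : ℝ} (ha : 0 ≤ a) (hb : 0 ≤ b)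
    (hab : a = 0 → b = 0) :
    (√(a + b) - √a) ^ 2 ≤ b ^ 2 / (4 * a) := by
  rcases ha.eq_or_lt with rfl | ha
  · simp [hab rfl]
  have hx := Real.sq_sqrt (add_nonneg ha.le hb)
  have hy := Real.sq_sqrt ha.le
  have hy0 : 0 < √a := Real.sqrt_pos.mpr ha
  have hxy : √a ≤ √(a + b) := Real.sqrt_le_sqrt (by linarith)
  rw [le_div_iff₀ (by positivity)]
  -- `√(a+b) - √a = b / (√(a+b) + √a)` and `√(a+b) + √a ≥ 2√a`
  nlinarith [mul_nonneg (sub_nonneg.mpr hxy) (sub_nonneg.mpr hxy),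
    mul_le_mul_of_nonneg_left hxy (mul_nonneg (sub_nonneg.mpr hxy) (sub_nonneg.mpr hxy))]

theorem Real.sInf_eq_zero_of_forall_exists_le {S : Set ℝ} (hS : ∀ q ∈ S, 0 ≤ q)
    (h : ∀ ε > 0, ∃ q ∈ S, q ≤ ε) : sInf S = 0 := by
  refine le_antisymm (le_of_forall_pos_le_add fun ε hε => ?_) (Real.sInf_nonneg hS)
  obtain ⟨q, hq, hqε⟩ := h ε hε
  simpa using (csInf_le ⟨0, hS⟩ hq).trans hqε

theorem Module.exists_forall_apply_ne_zero {k E F ι : Type*} [DivisionRing k] [Infinite k]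
    [AddCommGroup E] [Module k E] [AddCommGroup F] [Module k F] [Finite ι]
    (f : ι → E →ₗ[k] F) (hf : ∀ i, f i ≠ 0) : ∃ x, ∀ i, f i x ≠ 0 := by
  by_contra! h
  obtain ⟨i, hi⟩ := Subspace.exists_eq_top_of_iUnion_eq_univ (p := fun i => LinearMap.ker (f i))
    (Set.eq_univ_of_forall fun x => Set.mem_iUnion.mpr (h x))
  exact hf i (LinearMap.ker_eq_top.mp hi)

section Vectors
variable {ι : Type*} [Fintype ι]

theorem exists_smul_star_dotProduct_self_eq_one {w : ι → ℂ} (hw : w ≠ 0) :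
    ∃ c : ℂ, c ≠ 0 ∧ star (c • w) ⬝ᵥ (c • w) = 1 := by
  have hpos : 0 < star w ⬝ᵥ w := dotProduct_star_self_pos_iff.mpr hw
  obtain ⟨s, hs, hsw⟩ : ∃ s : ℝ, 0 < s ∧ star w ⬝ᵥ w = s :=
    ⟨(star w ⬝ᵥ w).re, by simpa using (Complex.lt_def.mp hpos).1,
      (Complex.ext rfl (by simpa using (Complex.lt_def.mp hpos).2.symm))⟩
  refine ⟨((√s)⁻¹ : ℝ), Complex.ofReal_ne_zero.mpr (by positivity), ?_⟩
  rw [star_smul, smul_dotProduct, dotProduct_smul, hsw, Complex.star_def, Complex.conj_ofReal,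
    smul_eq_mul, smul_eq_mul, ← Complex.ofReal_mul, ← Complex.ofReal_mul, ← mul_assoc,
    ← mul_inv, Real.mul_self_sqrt hs.le, inv_mul_cancel₀ hs.ne', Complex.ofReal_one]

theorem exists_ne_zero_forall_mulVec_ne_zero [DecidableEq ι] [Nonempty ι] {κ : Type*}
    [Finite κ] (A : κ → Matrix ι ι ℂ) :
    ∃ w : ι → ℂ, w ≠ 0 ∧ ∀ j, A j ≠ 0 → A j *ᵥ w ≠ 0 := by
  -- `1` joins the family so that the vector found is nonzero
  let B : Option {j // A j ≠ 0} → Matrix ι ι ℂ := fun j => j.elim 1 fun j => A j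
  have hB : ∀ j, B j ≠ 0 := by
    rintro (_ | j)
    exacts [one_ne_zero, j.2]
  obtain ⟨w, hw⟩ := Module.exists_forall_apply_ne_zero (fun j => toLin' (B j))
    fun j => (LinearEquiv.map_ne_zero_iff _).mpr (hB j)
  exact ⟨w, by simpa [B] using hw none, fun j hj => hw (some ⟨j, hj⟩)⟩

theorem exists_ne_zero_star_dotProduct_eq_zero [DecidableEq ι] (hι : 2 ≤ Fintype.card ι)
    (u : ι → ℂ) : ∃ w : ι → ℂ, w ≠ 0 ∧ star u ⬝ᵥ w = 0 := by
  have : LinearMap.ker (dotProductEquiv ℂ ι (star u)) ≠ ⊥ :=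
    LinearMap.ker_ne_bot_of_finrank_lt <| by
      simp only [Module.finrank_self, Module.finrank_fintype_fun_eq_card]; omega
  obtain ⟨w, hw, hw0⟩ := Submodule.exists_mem_ne_zero_of_ne_bot this
  exact ⟨w, hw0, hw⟩

theorem exists_orthonormal_pair_forall_mulVec_ne_zero [DecidableEq ι] (hι : 2 ≤ Fintype.card ι)
    {κ : Type*} [Finite κ] (A : κ → Matrix ι ι ℂ) :
    ∃ u v : ι → ℂ, star u ⬝ᵥ u = 1 ∧ star v ⬝ᵥ v = 1 ∧ star u ⬝ᵥ v = 0 ∧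
      ∀ j, A j ≠ 0 → A j *ᵥ u ≠ 0 := by
  have : Nonempty ι := Fintype.card_pos_iff.mp (by omega)
  obtain ⟨w, hw0, hw⟩ := exists_ne_zero_forall_mulVec_ne_zero A
  obtain ⟨c, hc, hcw⟩ := exists_smul_star_dotProduct_self_eq_one hw0
  obtain ⟨w', hw'0, hw'⟩ := exists_ne_zero_star_dotProduct_eq_zero hι (c • w)
  obtain ⟨d, -, hdw'⟩ := exists_smul_star_dotProduct_self_eq_one hw'0
  refine ⟨c • w, d • w', hcw, hdw', by rw [dotProduct_smul, hw', smul_zero], fun j hj => ?_⟩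
  rw [mulVec_smul]
  exact smul_ne_zero hc (hw j hj)

end Vectors

theorem Matrix.PosSemidef.mulVec_eq_zero_of_re_dotProduct_eq_zero {ι 𝕜 : Type*} [Fintype ι]
    [RCLike 𝕜] {A : Matrix ι ι 𝕜} (hA : A.PosSemidef) {x : ι → 𝕜}
    (h : RCLike.re (star x ⬝ᵥ A *ᵥ x) = 0) : A *ᵥ x = 0 :=
  (hA.dotProduct_mulVec_zero_iff x).mp <|
    RCLike.ext (by simpa using h)
      (by simpa using (RCLike.nonneg_iff.mp (hA.dotProduct_mulVec_nonneg x)).2)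

open scoped MatrixOrder in
theorem theta_eq_of_posSemidef_of_mul_self {n r : ℕ} (x : Matrix (Fin n) (Fin r) ℂ)
    {P : Matrix (Fin n) (Fin n) ℂ} (hP : P.PosSemidef) (h : P * P = x * xᴴ) : theta x = P := by
  have hx := posSemidef_self_mul_conjTranspose x
  have : theta x = cfc Real.sqrt (x * xᴴ) := by
    rw [hx.1.cfc_eq, IsHermitian.cfc, Unitary.conjStarAlgAut_apply]; rfl
  rw [this, ← cfcₙ_eq_cfc, ← CFC.sqrt_eq_real_sqrt _ hx.nonneg]
  exact CFC.sqrt_unique h hP.nonneg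

theorem rinner_add_left {p q : ℕ} (X Y B : Matrix (Fin p) (Fin q) ℂ) :
    rinner (X + Y) B = rinner X B + rinner Y B := by
  simp [rinner, Matrix.add_mul]

theorem rinner_smul_left {p q : ℕ} (s : ℝ) (X B : Matrix (Fin p) (Fin q) ℂ) :
    rinner (s • X) B = s * rinner X B := by
  simp [rinner]

theorem rinner_vecMulVec_star {n : ℕ} (u : Fin n → ℂ) (B : Matrix (Fin n) (Fin n) ℂ) :
    rinner (vecMulVec u (star u)) B = (star u ⬝ᵥ B *ᵥ u).re := by
  rw [rinner, conjTranspose_vecMulVec, star_star, vecMulVec_mul, trace_vecMulVec,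
    dotProduct_comm, dotProduct_mulVec]

theorem frob_smul_vecMulVec_star {n : ℕ} {v : Fin n → ℂ} (hv : star v ⬝ᵥ v = 1) {t : ℝ}
    (ht : 0 ≤ t) : frob (t • vecMulVec v (star v)) = t := by
  rw [frob, conjTranspose_smul, conjTranspose_vecMulVec, star_star, Matrix.smul_mul,
    Matrix.mul_smul, vecMulVec_mul_vecMulVec, hv, one_smul, trace_smul, trace_smul,
    trace_vecMulVec, dotProduct_comm, hv]
  simp [Real.sqrt_mul_self ht]

section TwoColumn

variable {n r : ℕ}

noncomputable def twoColumn (u v : Fin n → ℂ) (z o : Fin r) (t : ℝ) :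
    Matrix (Fin n) (Fin r) ℂ :=
  vecMulVec u (Pi.single z 1) + t • vecMulVec v (Pi.single o 1)

theorem twoColumn_mul_conjTranspose (u v : Fin n → ℂ) {z o : Fin r} (hzo : z ≠ o) (t : ℝ) :
    twoColumn u v z o t * (twoColumn u v z o t)ᴴ =
      vecMulVec u (star u) + t ^ 2 • vecMulVec v (star v) := by
  simp [twoColumn, Matrix.add_mul, Matrix.mul_add, vecMulVec_mul_vecMulVec, hzo, hzo.symm, sq,
    smul_smul]

variable {u v : Fin n → ℂ} (hu : star u ⬝ᵥ u = 1) (hv : star v ⬝ᵥ v = 1)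
  (huv : star u ⬝ᵥ v = 0)
include hu hv huv

theorem mul_self_vecMulVec_star_add_smul (s : ℝ) :
    (vecMulVec u (star u) + s • vecMulVec v (star v)) *
        (vecMulVec u (star u) + s • vecMulVec v (star v)) =
      vecMulVec u (star u) + s ^ 2 • vecMulVec v (star v) := by
  have hvu : star v ⬝ᵥ u = 0 := by rw [star_dotProduct, huv, star_zero]
  simp [Matrix.add_mul, Matrix.mul_add, vecMulVec_mul_vecMulVec, hu, hv, huv, hvu, smul_smul,
    sq]

theorem theta_twoColumn {z o : Fin r} (hzo : z ≠ o) {t : ℝ} (ht : 0 ≤ t) :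
    theta (twoColumn u v z o t) = vecMulVec u (star u) + t • vecMulVec v (star v) := by
  refine theta_eq_of_posSemidef_of_mul_self _
    ((posSemidef_vecMulVec_self_star u).add ((posSemidef_vecMulVec_self_star v).smul ht)) ?_
  rw [mul_self_vecMulVec_star_add_smul hu hv huv, twoColumn_mul_conjTranspose u v hzo]

end TwoColumn

section TwoColumnEstimates

variable {n r m : ℕ} {u v : Fin n → ℂ} {z o : Fin r}

theorem frob_theta_twoColumn_sub (hu : star u ⬝ᵥ u = 1) (hv : star v ⬝ᵥ v = 1)
    (huv : star u ⬝ᵥ v = 0) (hzo : z ≠ o) {t : ℝ} (ht : 0 ≤ t) :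
    frob (theta (twoColumn u v z o t) - theta (twoColumn u v z o 0)) = t := by
  rw [theta_twoColumn hu hv huv hzo ht, theta_twoColumn hu hv huv hzo le_rfl, zero_smul,
    add_zero, add_sub_cancel_left, frob_smul_vecMulVec_star hv ht]

theorem sum_sq_sqrt_rinner_twoColumn_sub_le (A : Fin m → Matrix (Fin n) (Fin n) ℂ)
    (hA : ∀ j, (A j).PosSemidef) (hgen : ∀ j, A j ≠ 0 → A j *ᵥ u ≠ 0) (hzo : z ≠ o)
    (t : ℝ) :
    ∑ j, (√(rinner (twoColumn u v z o t * (twoColumn u v z o t)ᴴ) (A j))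
        - √(rinner (twoColumn u v z o 0 * (twoColumn u v z o 0)ᴴ) (A j))) ^ 2
      ≤ t ^ 4 *
        ∑ j, (star v ⬝ᵥ A j *ᵥ v).re ^ 2 / (4 * (star u ⬝ᵥ A j *ᵥ u).re) := by
  rw [Finset.mul_sum]
  refine Finset.sum_le_sum fun j _ => ?_
  have ha : 0 ≤ (star u ⬝ᵥ A j *ᵥ u).re := (hA j).re_dotProduct_nonneg u
  have hc : 0 ≤ (star v ⬝ᵥ A j *ᵥ v).re := (hA j).re_dotProduct_nonneg v
  have hac : (star u ⬝ᵥ A j *ᵥ u).re = 0 → t ^ 2 * (star v ⬝ᵥ A j *ᵥ v).re = 0 := by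
    intro h
    have : A j = 0 := of_not_not fun hA0 =>
      hgen j hA0 ((hA j).mulVec_eq_zero_of_re_dotProduct_eq_zero h)
    simp [this]
  simp only [twoColumn_mul_conjTranspose u v hzo, rinner_add_left, rinner_smul_left,
    rinner_vecMulVec_star, zero_pow two_ne_zero, zero_mul, add_zero]
  exact (Real.sq_sqrt_add_sub_sqrt_le ha (mul_nonneg (sq_nonneg t) hc) hac).trans_eq (by ring)

end TwoColumnEstimates

theorem alpha_lower_lipschitz_zero_general (n r m : ℕ) (hr : 1 < r) (hrn : r ≤ n)
    (A : Fin m → Matrix (Fin n) (Fin n) ℂ) (hA : ∀ j, (A j).PosSemidef) :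
    sInf {t : ℝ | ∃ x y : Matrix (Fin n) (Fin r) ℂ, theta x ≠ theta y ∧
      t = (∑ j, (Real.sqrt (rinner (x * xᴴ) (A j))
            - Real.sqrt (rinner (y * yᴴ) (A j))) ^ 2)
          / frob (theta x - theta y) ^ 2} = 0 := by
  obtain ⟨u, v, hu, hv, huv, hgen⟩ :=
    exists_orthonormal_pair_forall_mulVec_ne_zero (by rw [Fintype.card_fin]; omega) A
  let z : Fin r := ⟨0, by omega⟩
  let o : Fin r := ⟨1, hr⟩
  have hzo : z ≠ o := by simp [z, o, Fin.ext_iff]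
  set C := ∑ j, (star v ⬝ᵥ A j *ᵥ v).re ^ 2 / (4 * (star u ⬝ᵥ A j *ᵥ u).re)
  have hC : 0 ≤ C := Finset.sum_nonneg fun j _ => by
    have : 0 ≤ (star u ⬝ᵥ A j *ᵥ u).re := (hA j).re_dotProduct_nonneg u
    positivity
  refine Real.sInf_eq_zero_of_forall_exists_le (by rintro _ ⟨x, y, -, rfl⟩; positivity)
    fun ε hε => ?_
  set t := √(ε / (C + 1))
  have ht : 0 < t := by positivity
  have hfrob := frob_theta_twoColumn_sub hu hv huv hzo ht.le
  refine ⟨_, ⟨twoColumn u v z o t, twoColumn u v z o 0, fun h => ?_, rfl⟩, ?_⟩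
  · simp [h, frob, ht.ne] at hfrob
  rw [hfrob, div_le_iff₀ (by positivity)]
  have htC : t ^ 2 * C ≤ ε := by
    rw [Real.sq_sqrt (by positivity), div_mul_eq_mul_div, div_le_iff₀ (by positivity)]
    nlinarith
  calc _ ≤ t ^ 4 * C := sum_sq_sqrt_rinner_twoColumn_sub_le A hA hgen hzo t
    _ = t ^ 2 * (t ^ 2 * C) := by ring
    _ ≤ ε * t ^ 2 := by rw [mul_comm ε]; gcongr

/-- for `n ≥ r > 1` and a generalized phase retrievable frame of positive
semidefinite matrices `A_j`, the squared global lower Lipschitz constant `A₀` of the `α`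
analysis map `α_j(x) = ⟨x x*, A_j⟩_ℝ^{1/2}` relative to `‖θ(x) − θ(y)‖₂` equals `0`. -/
theorem alpha_lower_lipschitz_zero (n r m : ℕ) (hr : 1 < r) (hrn : r ≤ n)
    (A : Fin m → Matrix (Fin n) (Fin n) ℂ) (hA : ∀ j, (A j).PosSemidef)
    (hpr : ∀ x y : Matrix (Fin n) (Fin r) ℂ,
      (∀ j, rinner (x * xᴴ) (A j) = rinner (y * yᴴ) (A j)) → x * xᴴ = y * yᴴ) :
    sInf {t : ℝ | ∃ x y : Matrix (Fin n) (Fin r) ℂ, theta x ≠ theta y ∧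
      t = (∑ j, (Real.sqrt (rinner (x * xᴴ) (A j))
            - Real.sqrt (rinner (y * yᴴ) (A j))) ^ 2)
          / frob (theta x - theta y) ^ 2} = 0 :=
  alpha_lower_lipschitz_zero_general n r m hr hrn A hA
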